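/- (Main theorem, K ≥ 3 case) Let m(y) = ∫ φ(y−μ) dF(μ) be the marginal of a N(μ,1) model under an arbitrary Borel probability prior F on ℝ. There is no prior F and no polynomial P of degree K ≥ 3 such that log m(y) = P(y) for all real y. Equivalently, for all priors F and all β₀,…,β_K with β_K ≠ 0 and K ≥ 3, ∫ φ(y−μ) dF(μ) ≠ exp(β₀ + Σ_{k=1}^K β_k y^k) for some y. -/

import Mathlib

open MeasureTheory Real Finset

/-!
If `m(y) = exp (p y)` for a polynomial `p`, then `p` is bounded above, because `φ` is bounded,
and `p y + y²` is bounded below, because `F` puts positive mass on some ball `|μ| ≤ M`, where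
`φ (y - μ) ≥ φ 0 · exp (-M² - y²)`. The first bound excludes a positive leading coefficient and
the second a negative one as soon as `deg p ≥ 3`.
-/

/-- Standard normal density. -/
noncomputable def stdNormalPDF (x : ℝ) : ℝ := (Real.sqrt (2 * π))⁻¹ * Real.exp (-x ^ 2 / 2)

namespace Polynomial

theorem coeff_sum_range_C_mul_X_pow {R : Type*} [Semiring R] (K : ℕ) (β : ℕ → R) :
    (∑ k ∈ range (K + 1), C (β k) * X ^ k).coeff K = β K := by
  simp [finsetSum_coeff]

theorem natDegree_le_two_of_le_of_sub_sq_le {p : ℝ[X]} {a b : ℝ}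
    (hle : ∀ x, p.eval x ≤ b) (hge : ∀ x, a - x ^ 2 ≤ p.eval x) : p.natDegree ≤ 2 := by
  by_contra! hdeg
  have hdeg_pos : 0 < p.degree := natDegree_pos_iff_degree_pos.mp (by omega)
  rcases le_or_gt p.leadingCoeff 0 with hlc | hlc
  · have hsq_lt : (X ^ 2 : ℝ[X]).degree < p.degree := by
      rw [degree_X_pow, degree_eq_natDegree (ne_zero_of_degree_gt hdeg_pos)]
      exact_mod_cast hdeg
    have htend : Filter.Tendsto (fun x => (p + X ^ 2).eval x) Filter.atTop Filter.atBot :=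
      (p + X ^ 2).tendsto_atBot_of_leadingCoeff_nonpos
        (by rwa [degree_add_eq_left_of_degree_lt hsq_lt])
        (by rwa [leadingCoeff_add_of_degree_lt' hsq_lt])
    obtain ⟨x, hx⟩ := (htend.eventually_lt_atBot a).exists
    simp only [eval_add, eval_pow, eval_X] at hx
    linarith [hge x]
  · obtain ⟨x, hx⟩ :=
      ((tendsto_atTop_of_leadingCoeff_nonneg p hdeg_pos hlc.le).eventually_gt_atTop b).exists
    exact (hle x).not_gt hx

end Polynomial

section Marginal

variable (F : Measure ℝ)

theorem stdNormalPDF_nonneg (x : ℝ) : 0 ≤ stdNormalPDF x := by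
  unfold stdNormalPDF
  positivity

theorem stdNormalPDF_le (x : ℝ) : stdNormalPDF x ≤ (Real.sqrt (2 * π))⁻¹ := by
  unfold stdNormalPDF
  exact mul_le_of_le_one_right (by positivity) (exp_le_one_iff.mpr (by nlinarith [sq_nonneg x]))

theorem continuous_stdNormalPDF : Continuous stdNormalPDF := by
  unfold stdNormalPDF
  fun_prop

theorem integrable_stdNormalPDF_sub [IsFiniteMeasure F] (y : ℝ) :
    Integrable (fun μ => stdNormalPDF (y - μ)) F :=
  (integrable_const (Real.sqrt (2 * π))⁻¹).mono'
    (continuous_stdNormalPDF.comp (continuous_sub_left y)).aestronglyMeasurable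
    (ae_of_all _ fun μ => by
      rw [norm_of_nonneg (stdNormalPDF_nonneg _)]
      exact stdNormalPDF_le _)

theorem integral_stdNormalPDF_sub_le [IsProbabilityMeasure F] (y : ℝ) :
    ∫ μ, stdNormalPDF (y - μ) ∂F ≤ (Real.sqrt (2 * π))⁻¹ := by
  calc ∫ μ, stdNormalPDF (y - μ) ∂F ≤ ∫ _, (Real.sqrt (2 * π))⁻¹ ∂F :=
        integral_mono (integrable_stdNormalPDF_sub F y) (integrable_const _)
          fun μ => stdNormalPDF_le _
    _ = (Real.sqrt (2 * π))⁻¹ := by simp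

theorem stdNormalPDF_sub_ge {y μ M : ℝ} (hμ : |μ| ≤ M) :
    (Real.sqrt (2 * π))⁻¹ * exp (-M ^ 2) * exp (-y ^ 2) ≤ stdNormalPDF (y - μ) := by
  rw [stdNormalPDF, mul_assoc, ← exp_add]
  gcongr
  nlinarith [sq_nonneg (y + μ), sq_abs μ, abs_nonneg μ]

theorem exists_pos_mul_exp_neg_sq_le_integral_stdNormalPDF_sub [IsFiniteMeasure F] [NeZero F] :
    ∃ a > 0, ∀ y, a * exp (-y ^ 2) ≤ ∫ μ, stdNormalPDF (y - μ) ∂F := by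
  obtain ⟨M, hM⟩ : ∃ M : ℕ, 0 < F (Metric.closedBall 0 M) :=
    exists_measure_pos_of_not_measure_iUnion_null
      (by simpa [Metric.iUnion_closedBall_nat] using NeZero.ne F)
  set ε := F.real (Metric.closedBall 0 M)
  have hε : 0 < ε := ENNReal.toReal_pos hM.ne' (measure_ne_top _ _)
  refine ⟨(Real.sqrt (2 * π))⁻¹ * exp (-(M : ℝ) ^ 2) * ε, by positivity, fun y => ?_⟩
  calc (Real.sqrt (2 * π))⁻¹ * exp (-(M : ℝ) ^ 2) * ε * exp (-y ^ 2)
      = (Real.sqrt (2 * π))⁻¹ * exp (-(M : ℝ) ^ 2) * exp (-y ^ 2) * ε := by ring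
    _ ≤ ∫ μ in Metric.closedBall 0 M, stdNormalPDF (y - μ) ∂F :=
        setIntegral_ge_of_const_le_real Metric.isClosed_closedBall.measurableSet
          (measure_ne_top _ _)
          (fun μ hμ => stdNormalPDF_sub_ge (by simpa using hμ))
          (integrable_stdNormalPDF_sub F y).integrableOn
    _ ≤ ∫ μ, stdNormalPDF (y - μ) ∂F :=
        setIntegral_le_integral (integrable_stdNormalPDF_sub F y)
          (ae_of_all _ fun μ => stdNormalPDF_nonneg _)

end Marginal

open Polynomial in
/-- (Main theorem, `K ≥ 3` case) No Borel probability prior `F` on `ℝ` can produce a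
`N(μ,1)`-mixture marginal whose logarithm is a polynomial of degree `K ≥ 3`: for every
prior and every polynomial with `β_K ≠ 0`, `K ≥ 3`, the marginal differs from
`exp(β₀ + Σ_{k=1}^K β_k y^k)` at some `y`. -/
theorem no_prior_for_cubic_log_marginal
    (F : Measure ℝ) [IsProbabilityMeasure F]
    (K : ℕ) (hK : 3 ≤ K) (β : ℕ → ℝ) (hβK : β K ≠ 0) :
    ∃ y : ℝ, (∫ μ, stdNormalPDF (y - μ) ∂F)
      ≠ Real.exp (∑ k ∈ Finset.range (K + 1), β k * y ^ k) := by
  by_contra! hmarg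
  set p : ℝ[X] := ∑ k ∈ range (K + 1), C (β k) * X ^ k
  have hp : ∀ y, (∫ μ, stdNormalPDF (y - μ) ∂F) = exp (p.eval y) := by
    simpa [p, eval_finsetSum] using hmarg
  have hdeg : K ≤ p.natDegree :=
    le_natDegree_of_ne_zero (by rwa [coeff_sum_range_C_mul_X_pow])
  obtain ⟨a, ha, hlow⟩ := exists_pos_mul_exp_neg_sq_le_integral_stdNormalPDF_sub F
  have hle : ∀ y, p.eval y ≤ log (Real.sqrt (2 * π))⁻¹ := fun y =>
    (le_log_iff_exp_le (by positivity)).mpr (hp y ▸ integral_stdNormalPDF_sub_le F y)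
  have hge : ∀ y, log a - y ^ 2 ≤ p.eval y := fun y => by
    rw [sub_eq_add_neg, ← log_exp (-y ^ 2), ← log_mul ha.ne' (exp_pos _).ne']
    exact (log_le_iff_le_exp (by positivity)).mpr (hp y ▸ hlow y)
  have := natDegree_le_two_of_le_of_sub_sq_le hle hge
  omega
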